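/- Let X have MEV distribution with unit Fréchet margins F and tail dependence function l, let I = {I₁,...,I_p} be a partition of {1,...,d}, and λ ∈ (0,∞)^p. Define M(I_j) = max_{i∈I_j} X_i, the max-min coefficient R(X,λ,I) = E[max_j F(M(I_j))^{λ_j} − min_j F(M(I_j))^{λ_j}], and for ∅≠T⊆{1,...,p}, e(T) = l(Σ_{j∈T} λ_j⁻¹ δ₁(I_j),...,Σ_{j∈T} λ_j⁻¹ δ_d(I_j)) / (1 + l(...)), where δ_i(I_j)=1 if i∈I_j and 0 otherwise. Then R(X,λ,I) = e({1,...,p}) − Σ_{∅≠T⊆{1,...,p}} (−1)^{|T|+1} e(T). -/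

import Mathlib

open MeasureTheory Finset

/-- Unit Fréchet distribution function F(x) = exp(-1/x). -/
noncomputable def frechetCDF (x : ℝ) : ℝ := Real.exp (-x⁻¹)

/-!
Fix a nonempty set `T` of blocks and put `Z = max_{j ∈ T} F(M(I_j))^{λ_j}`. Since the blocks are
disjoint, `Z ≤ u` says exactly that `X_i ≤ λ_j / (-log u)` for every `i ∈ I_j`, `j ∈ T`, and
max-stability turns the probability of this event into `u ^ l(v)`, where `v` is the weight vector
of `e(T)`. So `Z` has distribution function `u ↦ u ^ c` on `(0, 1)` with `c = l(v)`, whence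
`E Z = ∫₀¹ (1 - u ^ c) du = c / (1 + c) = e(T)`. The expectation of the minimum over all blocks
then follows from the inclusion–exclusion identity
`min_j a_j = ∑_{T ≠ ∅} (-1)^{|T|+1} max_{j∈T} a_j`.
-/

open Function

theorem frechetCDF_pos (x : ℝ) : 0 < frechetCDF x := Real.exp_pos _

theorem frechetCDF_le_one {x : ℝ} (hx : 0 ≤ x) : frechetCDF x ≤ 1 := by
  rw [frechetCDF, Real.exp_le_one_iff, neg_nonpos]
  positivity

theorem frechetCDF_rpow_le_one {x a : ℝ} (hx : 0 ≤ x) (ha : 0 ≤ a) : frechetCDF x ^ a ≤ 1 :=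
  Real.rpow_le_one (frechetCDF_pos x).le (frechetCDF_le_one hx) ha

theorem frechetCDF_le_self {x : ℝ} (hx : 0 < x) : frechetCDF x ≤ x := by
  rw [frechetCDF, Real.exp_neg, inv_le_comm₀ (Real.exp_pos _) hx]
  linarith [Real.add_one_le_exp x⁻¹]

theorem one_sub_frechetCDF_le (x : ℝ) : 1 - frechetCDF x ≤ x⁻¹ := by
  linarith [Real.add_one_le_exp (-x⁻¹), show frechetCDF x = Real.exp (-x⁻¹) from rfl]

theorem measurable_frechetCDF : Measurable frechetCDF := by
  unfold frechetCDF
  fun_prop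

theorem frechetCDF_rpow_le_iff {x a u : ℝ} (hx : 0 < x) (hu₀ : 0 < u) (hu₁ : u < 1) :
    frechetCDF x ^ a ≤ u ↔ x ≤ (-Real.log u)⁻¹ * a := by
  have hs : 0 < -Real.log u := neg_pos.2 (Real.log_neg hu₀ hu₁)
  rw [frechetCDF, ← Real.exp_mul, ← Real.le_log_iff_exp_le hu₀, inv_mul_eq_div,
    le_div_iff₀ hs, ← le_div_iff₀' hx, neg_mul, neg_le, div_eq_inv_mul]

theorem Finset.sup_sup'_distrib_left {ι α : Type*} [SemilatticeSup α] {s : Finset ι}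
    (hs : s.Nonempty) (f : ι → α) (c : α) : c ⊔ s.sup' hs f = s.sup' hs (fun i => c ⊔ f i) := by
  obtain ⟨i, hi⟩ := hs
  refine le_antisymm ?_ (sup'_le _ _ fun j hj => sup_le_sup_left (le_sup' f hj) c)
  exact sup_le (le_sup'_of_le _ hi le_sup_left) (sup'_mono_fun fun j _ => le_sup_right)

theorem Finset.inf'_eq_sum_powerset_sup' {ι R : Type*} [DecidableEq ι] [CommRing R]
    [LinearOrder R] {s : Finset ι} (hs : s.Nonempty) (a : ι → R) :
    s.inf' hs a = ∑ T ∈ s.powerset,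
      if hT : T.Nonempty then (-1) ^ (#T + 1) * T.sup' hT a else 0 := by
  induction hs using Finset.Nonempty.cons_induction generalizing a with
  | singleton x =>
    rw [show ({x} : Finset ι).powerset = {∅, {x}} from rfl]
    simp
  | cons x s hx hs ih =>
    have hinsert : ∀ T ∈ s.powerset,
        (if hT : (insert x T).Nonempty then
          (-1) ^ (#(insert x T) + 1) * (insert x T).sup' hT a else 0) =
        (if T = ∅ then a x else 0) -
          if hT : T.Nonempty then (-1) ^ (#T + 1) * T.sup' hT (fun j => a x ⊔ a j) else 0 := by
      intro T hTs
      obtain rfl | hT := T.eq_empty_or_nonempty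
      · simp
      rw [dif_pos (insert_nonempty x T), dif_pos hT, if_neg hT.ne_empty,
        card_insert_of_notMem fun h => hx (mem_powerset.1 hTs h), sup'_insert hT,
        sup_sup'_distrib_left]
      ring
    rw [inf'_cons hs]
    simp only [cons_eq_insert]
    rw [sum_powerset_insert hx, sum_congr rfl hinsert, sum_sub_distrib, sum_ite_eq' _ _ _,
      if_pos (empty_mem_powerset s), ← ih, ← ih, ← inf'_sup_distrib_left]
    linear_combination min_add_max (a x) (s.inf' hs a)

section Integral

variable {Ω κ : Type*} [MeasurableSpace Ω] {μ : Measure Ω}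

theorem integral_eq_div_of_measureReal_le_eq_rpow [IsProbabilityMeasure μ] {Z : Ω → ℝ}
    (hZm : AEMeasurable Z μ) (hZ₀ : 0 ≤ᵐ[μ] Z) (hZ₁ : ∀ᵐ ω ∂μ, Z ω ≤ 1) {c : ℝ} (hc : -1 < c)
    (hcdf : ∀ u ∈ Set.Ioo 0 1, μ.real {ω | Z ω ≤ u} = u ^ c) :
    ∫ ω, Z ω ∂μ = c / (1 + c) := by
  have hint : Integrable Z μ := Integrable.of_bound hZm.aestronglyMeasurable 1 <| by
    filter_upwards [hZ₀, hZ₁] with ω h₀ h₁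
    rwa [Real.norm_eq_abs, abs_of_nonneg h₀]
  have hbeyond : ∀ t, 1 ≤ t → μ.real {ω | t < Z ω} = 0 := fun t ht => by
    refine (measureReal_eq_zero_iff).2 (measure_mono_null (fun ω hω => ?_) (ae_iff.1 hZ₁))
    exact not_le.2 (ht.trans_lt hω)
  have htail : ∀ t ∈ Set.Ioc (0 : ℝ) 1, μ.real {ω | t < Z ω} = 1 - t ^ c := by
    rintro t ⟨ht₀, ht₁⟩
    rcases ht₁.lt_or_eq with ht₁ | rfl
    · rw [← hcdf t ⟨ht₀, ht₁⟩,
        ← probReal_compl_eq_one_sub₀ (nullMeasurableSet_le hZm aemeasurable_const)]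
      simp only [Set.compl_ofPred, not_le]
    · rw [hbeyond 1 le_rfl, Real.one_rpow, sub_self]
  rw [hint.integral_eq_integral_meas_lt hZ₀, setIntegral_eq_of_subset_of_ae_sdiff_eq_zero
      nullMeasurableSet_Ioi Set.Ioc_subset_Ioi_self ?_,
    setIntegral_congr_fun measurableSet_Ioc htail,
    ← intervalIntegral.integral_of_le zero_le_one, intervalIntegral.integral_sub
      intervalIntegrable_const (intervalIntegral.intervalIntegrable_rpow' hc),
    integral_rpow (Or.inl hc)]
  · rw [Real.one_rpow, Real.zero_rpow (show c + 1 ≠ 0 by linarith),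
      intervalIntegral.integral_const, smul_eq_mul]
    have : 1 + c ≠ 0 := by linarith
    rw [add_comm c 1]
    field_simp
    ring
  · refine Filter.Eventually.of_forall fun t ht => hbeyond t ?_
    simp only [Set.mem_sdiff, Set.mem_Ioi, Set.mem_Ioc, not_and, not_le] at ht
    exact (ht.2 ht.1).le

theorem measurable_finset_sup' {s : Finset κ} (hs : s.Nonempty) {f : κ → Ω → ℝ}
    (hf : ∀ j ∈ s, Measurable (f j)) : Measurable fun ω => s.sup' hs (f · ω) := by
  simpa only [← Finset.sup'_apply] using Finset.measurable_sup' hs hf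

theorem integrable_finset_sup' {s : Finset κ} (hs : s.Nonempty) {f : κ → Ω → ℝ}
    (hf : ∀ j ∈ s, Integrable (f j) μ) : Integrable (fun ω => s.sup' hs (f · ω)) μ := by
  simpa only [← Finset.sup'_apply] using
    Finset.sup'_induction hs f (p := (Integrable · μ)) (fun _ hg _ hh => hg.sup hh) hf

theorem integrable_finset_inf' {s : Finset κ} (hs : s.Nonempty) {f : κ → Ω → ℝ}
    (hf : ∀ j ∈ s, Integrable (f j) μ) : Integrable (fun ω => s.inf' hs (f · ω)) μ := by
  simpa only [← Finset.inf'_apply] using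
    Finset.inf'_induction hs f (p := (Integrable · μ)) (fun _ hg _ hh => hg.inf hh) hf

theorem integral_inf'_eq_sum_powerset [DecidableEq κ] {s : Finset κ} (hs : s.Nonempty)
    {f : κ → Ω → ℝ} (hf : ∀ j ∈ s, Integrable (f j) μ) :
    ∫ ω, s.inf' hs (f · ω) ∂μ = ∑ T ∈ s.powerset,
      if hT : T.Nonempty then (-1) ^ (#T + 1) * ∫ ω, T.sup' hT (f · ω) ∂μ else 0 := by
  simp_rw [inf'_eq_sum_powerset_sup' hs]
  rw [integral_finsetSum]
  · refine sum_congr rfl fun T _ => ?_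
    split_ifs
    · exact integral_const_mul _ _
    · exact integral_zero _ _
  · intro T hTs
    split_ifs with hT
    · exact (integrable_finset_sup' hT fun j hj => hf j (mem_powerset.1 hTs hj)).const_mul _
    · exact integrable_zero _ _ _

theorem integrable_frechetCDF_rpow [IsFiniteMeasure μ] {Y : Ω → ℝ} (hY : Measurable Y)
    (hY₀ : ∀ᵐ ω ∂μ, 0 ≤ Y ω) {a : ℝ} (ha : 0 ≤ a) :
    Integrable (fun ω => frechetCDF (Y ω) ^ a) μ :=
  Integrable.of_bound ((measurable_frechetCDF.comp hY).pow_const a).aestronglyMeasurable 1 <| by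
    filter_upwards [hY₀] with ω hω
    rw [Real.norm_of_nonneg (Real.rpow_nonneg (frechetCDF_pos _).le a)]
    exact frechetCDF_rpow_le_one hω ha

end Integral

section MaxStable

variable {Ω ι : Type*} [MeasurableSpace Ω]

def HasUnitFrechetMargins (μ : Measure Ω) (X : ι → Ω → ℝ) : Prop :=
  ∀ i, ∀ t : ℝ, 0 < t → μ.real {ω | X i ω ≤ t} = frechetCDF t

def IsMaxStable (μ : Measure Ω) (X : ι → Ω → ℝ) : Prop :=
  ∀ t : ℝ, 0 < t → ∀ x : ι → ℝ, (∀ i, 0 < x i) →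
    μ.real {ω | ∀ i, X i ω ≤ t * x i} ^ t = μ.real {ω | ∀ i, X i ω ≤ x i}

/-- The tail dependence function `l(x) = -log G(1/x)`; a coordinate `x i = 0` stands for
`1 / x i = ∞` and imposes no constraint. -/
noncomputable def tailDependence (μ : Measure Ω) (X : ι → Ω → ℝ) (x : ι → ℝ) : ℝ :=
  -Real.log (μ.real {ω | ∀ i, 0 < x i → X i ω ≤ (x i)⁻¹})

variable {μ : Measure Ω} {X : ι → Ω → ℝ}

theorem HasUnitFrechetMargins.ae_pos [IsFiniteMeasure μ] [Countable ι]
    (hX : HasUnitFrechetMargins μ X) : ∀ᵐ ω ∂μ, ∀ i, 0 < X i ω := by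
  refine ae_all_iff.2 fun i => ?_
  have hnonpos : μ.real {ω | X i ω ≤ 0} ≤ 0 := le_of_forall_pos_le_add fun t ht =>
    calc μ.real {ω | X i ω ≤ 0} ≤ μ.real {ω | X i ω ≤ t} :=
          measureReal_mono fun ω hω => le_trans hω ht.le
      _ = frechetCDF t := hX i t ht
      _ ≤ 0 + t := by rw [zero_add]; exact frechetCDF_le_self ht
  have hnull : μ {ω | X i ω ≤ 0} = 0 :=
    (measureReal_eq_zero_iff).1 (le_antisymm hnonpos measureReal_nonneg)
  simpa only [ae_iff, not_lt] using hnull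

theorem tendsto_measureReal_truncated [IsFiniteMeasure μ] [Finite ι] (v : ι → ℝ) {r : ℝ}
    (hr : 0 < r) :
    Filter.Tendsto (fun n : ℕ => μ.real {ω | ∀ i, X i ω ≤ r * if 0 < v i then (v i)⁻¹ else n + 1})
      Filter.atTop (nhds (μ.real {ω | ∀ i, 0 < v i → X i ω ≤ r * (v i)⁻¹})) := by
  set A : ℕ → Set Ω := fun n => {ω | ∀ i, X i ω ≤ r * if 0 < v i then (v i)⁻¹ else n + 1}
  have hmono : Monotone A := fun m n hmn ω hω i => (hω i).trans <| by
    gcongr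
    split_ifs
    · rfl
    · exact_mod_cast Nat.succ_le_succ hmn
  have hunion : ⋃ n, A n = {ω | ∀ i, 0 < v i → X i ω ≤ r * (v i)⁻¹} := by
    ext ω
    simp only [A, Set.mem_iUnion, Set.mem_ofPred_eq]
    refine ⟨fun ⟨n, hn⟩ i hi => by simpa [hi] using hn i, fun h => ?_⟩
    refine (Filter.eventually_all.2 fun i => ?_).exists (f := Filter.atTop)
    split_ifs with hi
    · exact Filter.Eventually.of_forall fun _ => h i hi
    · exact ((tendsto_natCast_atTop_atTop.atTop_add tendsto_const_nhds).const_mul_atTop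
        hr).eventually_ge_atTop (X i ω)
  rw [← hunion]
  exact (ENNReal.tendsto_toReal (measure_ne_top _ _)).comp (tendsto_measure_iUnion_atTop hmono)

theorem IsMaxStable.measureReal_weighted_rpow [IsFiniteMeasure μ] [Finite ι]
    (hX : IsMaxStable μ X) (v : ι → ℝ) {t : ℝ} (ht : 0 < t) :
    μ.real {ω | ∀ i, 0 < v i → X i ω ≤ t * (v i)⁻¹} ^ t =
      μ.real {ω | ∀ i, 0 < v i → X i ω ≤ (v i)⁻¹} := by
  have hpos : ∀ (n : ℕ) i, 0 < if 0 < v i then (v i)⁻¹ else (n : ℝ) + 1 := fun n i => by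
    split_ifs <;> positivity
  refine tendsto_nhds_unique ((tendsto_measureReal_truncated v ht).rpow_const (Or.inr ht.le)) ?_
  simp_rw [hX t ht _ (hpos _)]
  simpa using tendsto_measureReal_truncated (μ := μ) (X := X) v one_pos

theorem IsMaxStable.measureReal_weighted_pos [IsProbabilityMeasure μ] [Fintype ι]
    (hXm : ∀ i, Measurable (X i)) (hmarg : HasUnitFrechetMargins μ X) (hms : IsMaxStable μ X)
    (v : ι → ℝ) : 0 < μ.real {ω | ∀ i, 0 < v i → X i ω ≤ (v i)⁻¹} := by
  set t : ℝ := 1 + ∑ i, |v i|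
  have ht : 0 < t := by positivity
  rw [← hms.measureReal_weighted_rpow v ht]
  refine Real.rpow_pos_of_pos ?_ t
  set E := {ω | ∀ i, 0 < v i → X i ω ≤ t * (v i)⁻¹}
  have hexceed : ∀ i, μ.real {ω | 0 < v i ∧ t * (v i)⁻¹ < X i ω} ≤ |v i| / t := fun i => by
    by_cases hvi : 0 < v i
    · have hc : 0 < t * (v i)⁻¹ := by positivity
      calc μ.real {ω | 0 < v i ∧ t * (v i)⁻¹ < X i ω}
          = 1 - frechetCDF (t * (v i)⁻¹) := by
            rw [← hmarg i _ hc,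
              ← probReal_compl_eq_one_sub (measurableSet_le (hXm i) measurable_const)]
            congr 1; ext ω; simp [hvi]
        _ ≤ (t * (v i)⁻¹)⁻¹ := one_sub_frechetCDF_le _
        _ = |v i| / t := by rw [abs_of_pos hvi]; field_simp
    · simp only [hvi, false_and, Set.ofPred_false, measureReal_empty]
      positivity
  have hEc : Eᶜ = ⋃ i, {ω | 0 < v i ∧ t * (v i)⁻¹ < X i ω} := by
    ext ω
    simp [E]
  have hunion : μ.real Eᶜ ≤ (∑ i, |v i|) / t := by
    rw [hEc, sum_div]
    exact (measureReal_iUnion_fintype_le _).trans (sum_le_sum fun i _ => hexceed i)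
  have hlt : (∑ i, |v i|) / t < 1 := by
    rw [div_lt_one ht]
    linarith
  have hcover : 1 ≤ μ.real E + μ.real Eᶜ := by
    simpa using measureReal_union_le (μ := μ) E Eᶜ
  linarith

end MaxStable

noncomputable def blockWeight {ι κ : Type*} [DecidableEq ι] (I : κ → Finset ι) (lam : κ → ℝ)
    (T : Finset κ) (i : ι) : ℝ :=
  ∑ j ∈ T, (lam j)⁻¹ * (if i ∈ I j then 1 else 0)

section BlockWeight

variable {ι κ : Type*} [DecidableEq ι] {I : κ → Finset ι} {lam : κ → ℝ} {T : Finset κ}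

theorem blockWeight_nonneg (hlam : ∀ j, 0 < lam j) (i : ι) : 0 ≤ blockWeight I lam T i :=
  sum_nonneg fun j _ => mul_nonneg (inv_pos.2 (hlam j)).le (by split_ifs <;> norm_num)

theorem blockWeight_eq_of_mem (hdisj : Pairwise (Disjoint on I)) {i : ι} {j : κ} (hj : j ∈ T)
    (hi : i ∈ I j) : blockWeight I lam T i = (lam j)⁻¹ := by
  rw [blockWeight, sum_eq_single_of_mem j hj fun k _ hkj => ?_, if_pos hi, mul_one]
  rw [if_neg (disjoint_left.1 (hdisj hkj.symm) hi), mul_zero]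

theorem blockWeight_pos_iff (hdisj : Pairwise (Disjoint on I)) (hlam : ∀ j, 0 < lam j) {i : ι} :
    0 < blockWeight I lam T i ↔ ∃ j ∈ T, i ∈ I j := by
  refine ⟨fun h => ?_, fun ⟨j, hj, hi⟩ => ?_⟩
  · by_contra! hnot
    refine h.ne' (sum_eq_zero fun j hj => ?_)
    rw [if_neg (hnot j hj), mul_zero]
  · rw [blockWeight_eq_of_mem hdisj hj hi]
    exact inv_pos.2 (hlam j)

theorem sup'_frechetCDF_rpow_le_iff (hdisj : Pairwise (Disjoint on I)) (hlam : ∀ j, 0 < lam j)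
    (hT : T.Nonempty) (hIne : ∀ j, (I j).Nonempty) {x : ι → ℝ} (hx : ∀ i, 0 < x i) {u : ℝ}
    (hu₀ : 0 < u) (hu₁ : u < 1) :
    T.sup' hT (fun j => frechetCDF ((I j).sup' (hIne j) x) ^ lam j) ≤ u ↔
      ∀ i, 0 < blockWeight I lam T i → x i ≤ (-Real.log u)⁻¹ * (blockWeight I lam T i)⁻¹ := by
  have hM : ∀ j, 0 < (I j).sup' (hIne j) x := fun j =>
    (hx _).trans_le (le_sup' x (hIne j).choose_spec)
  simp only [sup'_le_iff, frechetCDF_rpow_le_iff (hM _) hu₀ hu₁, blockWeight_pos_iff hdisj hlam]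
  constructor
  · rintro h i ⟨j, hj, hi⟩
    rw [blockWeight_eq_of_mem hdisj hj hi, inv_inv]
    exact h j hj i hi
  · intro h j hj i hi
    simpa [blockWeight_eq_of_mem hdisj hj hi] using h i ⟨j, hj, hi⟩

end BlockWeight

theorem integral_sup'_frechetCDF_rpow {Ω ι κ : Type*} [MeasurableSpace Ω] {μ : Measure Ω}
    [IsProbabilityMeasure μ] [Fintype ι] [DecidableEq ι] {X : ι → Ω → ℝ}
    (hXm : ∀ i, Measurable (X i)) (hmarg : HasUnitFrechetMargins μ X) (hms : IsMaxStable μ X)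
    {I : κ → Finset ι} (hIne : ∀ j, (I j).Nonempty) (hdisj : Pairwise (Disjoint on I))
    {lam : κ → ℝ} (hlam : ∀ j, 0 < lam j) {T : Finset κ} (hT : T.Nonempty) :
    ∫ ω, T.sup' hT (fun j => frechetCDF ((I j).sup' (hIne j) (X · ω)) ^ lam j) ∂μ =
      tailDependence μ X (blockWeight I lam T) /
        (1 + tailDependence μ X (blockWeight I lam T)) := by
  set v := blockWeight I lam T
  have hP : 0 < μ.real {ω | ∀ i, 0 < v i → X i ω ≤ (v i)⁻¹} :=
    hms.measureReal_weighted_pos hXm hmarg v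
  have hc : 0 ≤ tailDependence μ X v := neg_nonneg.2 (Real.log_nonpos hP.le measureReal_le_one)
  refine integral_eq_div_of_measureReal_le_eq_rpow ?_ ?_ ?_ (by linarith)
    fun u ⟨hu₀, hu₁⟩ => ?_
  · exact (measurable_finset_sup' hT fun j _ => (measurable_frechetCDF.comp
      (measurable_finset_sup' (hIne j) fun i _ => hXm i)).pow_const _).aemeasurable
  · obtain ⟨j, hj⟩ := hT
    exact Filter.Eventually.of_forall fun ω =>
      le_sup'_of_le _ hj (Real.rpow_nonneg (frechetCDF_pos _).le _)
  · filter_upwards [hmarg.ae_pos] with ω hω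
    exact sup'_le _ _ fun j _ => frechetCDF_rpow_le_one
      (le_sup'_of_le _ (hIne j).choose_spec (hω _).le) (hlam j).le
  have hs : 0 < -Real.log u := neg_pos.2 (Real.log_neg hu₀ hu₁)
  calc μ.real {ω | T.sup' hT (fun j => frechetCDF ((I j).sup' (hIne j) (X · ω)) ^ lam j) ≤ u}
      = μ.real {ω | ∀ i, 0 < v i → X i ω ≤ (-Real.log u)⁻¹ * (v i)⁻¹} := by
        refine measureReal_congr ?_
        filter_upwards [hmarg.ae_pos] with ω hω
        exact propext (sup'_frechetCDF_rpow_le_iff hdisj hlam hT hIne hω hu₀ hu₁)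
    _ = μ.real {ω | ∀ i, 0 < v i → X i ω ≤ (v i)⁻¹} ^ (-Real.log u) := by
        rw [← hms.measureReal_weighted_rpow v (inv_pos.2 hs),
          Real.rpow_inv_rpow measureReal_nonneg hs.ne']
    _ = u ^ tailDependence μ X v := by
        rw [tailDependence, Real.rpow_def_of_pos hP, Real.rpow_def_of_pos hu₀]
        ring_nf

theorem stmt6_general
    {Ω : Type*} [MeasurableSpace Ω] (μ : Measure Ω) [IsProbabilityMeasure μ]
    {d p : ℕ} (hp : 0 < p)
    (X : Fin d → Ω → ℝ) (hXm : ∀ j, Measurable (X j))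
    (hmarg : ∀ j, ∀ t : ℝ, 0 < t → (μ {ω | X j ω ≤ t}).toReal = frechetCDF t)
    (hms : ∀ t : ℝ, 0 < t → ∀ x : Fin d → ℝ, (∀ j, 0 < x j) →
      ((μ {ω | ∀ j, X j ω ≤ t * x j}).toReal) ^ t = (μ {ω | ∀ j, X j ω ≤ x j}).toReal)
    (l : (Fin d → ℝ) → ℝ)
    (hl : ∀ x : Fin d → ℝ, (∀ j, 0 ≤ x j) →
      l x = - Real.log ((μ {ω | ∀ j, 0 < x j → X j ω ≤ (x j)⁻¹}).toReal))
    -- I is a partition of {1,...,d} into nonempty blocks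
    (I : Fin p → Finset (Fin d)) (hIne : ∀ j, (I j).Nonempty)
    (hdisj : ∀ j k, j ≠ k → Disjoint (I j) (I k))
    (lam : Fin p → ℝ) (hlam : ∀ j, 0 < lam j)
    (e : Finset (Fin p) → ℝ)
    (he : ∀ T, e T =
      l (fun i => ∑ j ∈ T, (lam j)⁻¹ * (if i ∈ I j then 1 else 0))
        / (1 + l (fun i => ∑ j ∈ T, (lam j)⁻¹ * (if i ∈ I j then 1 else 0)))) :
    ∫ ω, (Finset.univ.sup' ⟨⟨0, hp⟩, Finset.mem_univ _⟩
          (fun j => frechetCDF ((I j).sup' (hIne j) (fun i => X i ω)) ^ lam j)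
        - Finset.univ.inf' ⟨⟨0, hp⟩, Finset.mem_univ _⟩
          (fun j => frechetCDF ((I j).sup' (hIne j) (fun i => X i ω)) ^ lam j)) ∂μ
      = e Finset.univ
        - ∑ T ∈ ((Finset.univ : Finset (Fin p)).powerset.erase ∅),
            (-1 : ℝ) ^ (T.card + 1) * e T := by
  have hf : ∀ j ∈ Finset.univ, Integrable
      (fun ω => frechetCDF ((I j).sup' (hIne j) (fun i => X i ω)) ^ lam j) μ := fun j _ =>
    integrable_frechetCDF_rpow (measurable_finset_sup' (hIne j) fun i _ => hXm i)
      ((HasUnitFrechetMargins.ae_pos hmarg).mono fun ω hω =>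
        le_sup'_of_le _ (hIne j).choose_spec (hω _).le) (hlam j).le
  have hexp : ∀ T (hT : T.Nonempty), ∫ ω, T.sup' hT
      (fun j => frechetCDF ((I j).sup' (hIne j) (fun i => X i ω)) ^ lam j) ∂μ = e T := by
    intro T hT
    have hl' : l (blockWeight I lam T) = tailDependence μ X (blockWeight I lam T) :=
      hl _ (blockWeight_nonneg hlam)
    rw [integral_sup'_frechetCDF_rpow hXm hmarg hms hIne hdisj hlam hT, he T, ← hl']
    rfl
  have hs : (univ : Finset (Fin p)).Nonempty := ⟨⟨0, hp⟩, mem_univ _⟩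
  refine (integral_sub (integrable_finset_sup' hs hf) (integrable_finset_inf' hs hf)).trans ?_
  rw [integral_inf'_eq_sum_powerset hs hf, hexp, ← sum_erase _ (dif_neg Finset.not_nonempty_empty)]
  refine congrArg _ (sum_congr rfl fun T hT => ?_)
  rw [dif_pos (nonempty_of_ne_empty (ne_of_mem_erase hT)), hexp]

/-- The max-min coefficient R(X,λ,I) equals e({1,...,p}) minus the alternating
sum of e(T) over nonempty subsets T. -/
theorem stmt6
    {Ω : Type*} [MeasurableSpace Ω] (μ : Measure Ω) [IsProbabilityMeasure μ]
    {d p : ℕ} (hd : 0 < d) (hp : 0 < p)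
    (X : Fin d → Ω → ℝ) (hXm : ∀ j, Measurable (X j))
    (hmarg : ∀ j, ∀ t : ℝ, 0 < t → (μ {ω | X j ω ≤ t}).toReal = frechetCDF t)
    (hms : ∀ t : ℝ, 0 < t → ∀ x : Fin d → ℝ, (∀ j, 0 < x j) →
      ((μ {ω | ∀ j, X j ω ≤ t * x j}).toReal) ^ t = (μ {ω | ∀ j, X j ω ≤ x j}).toReal)
    (l : (Fin d → ℝ) → ℝ)
    (hl : ∀ x : Fin d → ℝ, (∀ j, 0 ≤ x j) →
      l x = - Real.log ((μ {ω | ∀ j, 0 < x j → X j ω ≤ (x j)⁻¹}).toReal))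
    -- I is a partition of {1,...,d} into nonempty blocks
    (I : Fin p → Finset (Fin d)) (hIne : ∀ j, (I j).Nonempty)
    (hdisj : ∀ j k, j ≠ k → Disjoint (I j) (I k)) (hcover : ∀ i, ∃ j, i ∈ I j)
    (lam : Fin p → ℝ) (hlam : ∀ j, 0 < lam j)
    (e : Finset (Fin p) → ℝ)
    (he : ∀ T, e T =
      l (fun i => ∑ j ∈ T, (lam j)⁻¹ * (if i ∈ I j then 1 else 0))
        / (1 + l (fun i => ∑ j ∈ T, (lam j)⁻¹ * (if i ∈ I j then 1 else 0)))) :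
    ∫ ω, (Finset.univ.sup' ⟨⟨0, hp⟩, Finset.mem_univ _⟩
          (fun j => frechetCDF ((I j).sup' (hIne j) (fun i => X i ω)) ^ lam j)
        - Finset.univ.inf' ⟨⟨0, hp⟩, Finset.mem_univ _⟩
          (fun j => frechetCDF ((I j).sup' (hIne j) (fun i => X i ω)) ^ lam j)) ∂μ
      = e Finset.univ
        - ∑ T ∈ ((Finset.univ : Finset (Fin p)).powerset.erase ∅),
            (-1 : ℝ) ^ (T.card + 1) * e T :=
  stmt6_general μ hp X hXm hmarg hms l hl I hIne hdisj lam hlam e he
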